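/- arXiv:2406.12086 — 10 statements merged into one kernel-verified Lean document; each statement's English description precedes it below -/
import Mathlib

section
/- Let A be an m×n complex matrix with spectral norm at most 1, b a unit vector in the column space of A, and x the minimum-norm solution of Ax = b. If every nonzero singular value of A is at least 1/κ, then every nonzero singular value of G = (I - bb†)A is at least 1/κ. -/
open scoped ComplexInnerProductSpace

/-- If every nonzero singular value of `A` is at least `1/κ` (equivalently,
`‖A v‖ ≥ κ⁻¹ ‖v‖` for all `v` orthogonal to `ker A`), `‖A‖ ≤ 1`, and `b` is a unit vector
in the column space of `A`, then every nonzero singular value of `G = (I - b b†) A`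
is at least `1/κ`. -/
theorem stmt0 (m n : ℕ) (A : Matrix (Fin m) (Fin n) ℂ) (κ : ℝ) (hκ : 1 ≤ κ)
    (b : EuclideanSpace ℂ (Fin m)) (hb : ‖b‖ = 1)
    (hbrange : b ∈ LinearMap.range (Matrix.toEuclideanLin A))
    (hAnorm : ∀ v : EuclideanSpace ℂ (Fin n), ‖Matrix.toEuclideanLin A v‖ ≤ ‖v‖)
    (hAsv : ∀ v : EuclideanSpace ℂ (Fin n),
      (∀ u : EuclideanSpace ℂ (Fin n), Matrix.toEuclideanLin A u = 0 → ⟪u, v⟫ = 0) →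
      κ⁻¹ * ‖v‖ ≤ ‖Matrix.toEuclideanLin A v‖) :
    ∀ v : EuclideanSpace ℂ (Fin n),
      (∀ u : EuclideanSpace ℂ (Fin n),
        Matrix.toEuclideanLin A u - ⟪b, Matrix.toEuclideanLin A u⟫ • b = 0 → ⟪u, v⟫ = 0) →
      κ⁻¹ * ‖v‖ ≤ ‖Matrix.toEuclideanLin A v - ⟪b, Matrix.toEuclideanLin A v⟫ • b‖ := by
  set T := Matrix.toEuclideanLin A with hT
  intro v hv
  -- inner product of b with itself
  have hbb : ⟪b, b⟫ = 1 := by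
    rw [inner_self_eq_norm_sq_to_K, hb]; norm_num
  -- minimum norm solution x : T x = b, x ⊥ ker T
  obtain ⟨x₀, hx₀⟩ := hbrange
  set K := LinearMap.ker T with hK
  set x : EuclideanSpace ℂ (Fin n) := x₀ - (K.orthogonalProjectionOnto x₀ : EuclideanSpace ℂ (Fin n)) with hx
  have hxker : x ∈ Kᗮ := by
    have := K.sub_starProjection_mem_orthogonal x₀; rwa [Submodule.starProjection_apply] at this
  have hTx : T x = b := by
    have h1 : T ((K.orthogonalProjectionOnto x₀ : EuclideanSpace ℂ (Fin n))) = 0 := by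
      exact (K.orthogonalProjectionOnto x₀).2
    rw [hx, map_sub, h1, sub_zero, hx₀]
  -- v orthogonal to ker T
  have hkerv : ∀ u, T u = 0 → ⟪u, v⟫ = 0 := by
    intro u hu
    apply hv u
    rw [hu, inner_zero_right, zero_smul, sub_zero]
  -- v orthogonal to x
  have hxv : ⟪x, v⟫ = 0 := by
    apply hv x
    rw [hTx, hbb, one_smul, sub_self]
  set c := ⟪b, T v⟫ with hc
  set w : EuclideanSpace ℂ (Fin n) := v - c • x with hw
  have hwker : ∀ u, T u = 0 → ⟪u, w⟫ = 0 := by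
    intro u hu
    rw [hw, inner_sub_right, inner_smul_right, hkerv u hu,
      (hxker u (LinearMap.mem_ker.mpr hu) : ⟪u, x⟫ = 0)]
    ring
  have hTw : T w = T v - c • b := by
    rw [hw, map_sub, map_smul, hTx]
  have hvw : ‖v‖ ≤ ‖w‖ := by
    have horth : ⟪(-(c • x) : EuclideanSpace ℂ (Fin n)), v⟫ = 0 := by
      rw [inner_neg_left, inner_smul_left, hxv]; ring
    have := norm_add_sq_eq_norm_sq_add_norm_sq_of_inner_eq_zero _ _ horth
    have hws : w = -(c • x) + v := by rw [hw]; abel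
    nlinarith [norm_nonneg v, norm_nonneg w, norm_nonneg (-(c • x) : EuclideanSpace ℂ (Fin n)), sq_nonneg ‖(-(c • x) : EuclideanSpace ℂ (Fin n))‖, hws ▸ this]
  calc κ⁻¹ * ‖v‖ ≤ κ⁻¹ * ‖w‖ := by
        apply mul_le_mul_of_nonneg_left hvw
        positivity
    _ ≤ ‖T w‖ := hAsv w hwker
    _ = ‖T v - c • b‖ := by rw [hTw]
end

section
/- For Δ ∈ (0,1) and positive integer ℓ, the polynomial F_{Δ,ℓ}(x) = T_ℓ((1+Δ²−2x²)/(1−Δ²)) / T_ℓ((1+Δ²)/(1−Δ²)) satisfies: (1) |F_{Δ,ℓ}(x)| ≤ 1 for all x ∈ [−1,1]; (2) F_{Δ,ℓ}(0) = 1; (3) for all x ∈ [Δ,1], |F_{Δ,ℓ}(x)| ≤ 1/T_ℓ((1+Δ²)/(1−Δ²)) = 1/cosh(ℓ·arccosh((1+Δ²)/(1−Δ²))). -/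
/-- `arccosh y = log (y + √(y² − 1))` for `y ≥ 1`. -/
noncomputable def arccosh (y : ℝ) : ℝ := Real.log (y + Real.sqrt (y ^ 2 - 1))

/-- Evaluation of the `ℓ`-th Chebyshev polynomial of the first kind. -/
noncomputable def Tval (ℓ : ℕ) (z : ℝ) : ℝ := (Polynomial.Chebyshev.T ℝ ℓ).eval z

/-- The eigenstate-filtering polynomial `F_{Δ,ℓ}`. -/
noncomputable def Fpoly (Δ : ℝ) (ℓ : ℕ) (x : ℝ) : ℝ :=
  Tval ℓ ((1 + Δ ^ 2 - 2 * x ^ 2) / (1 - Δ ^ 2)) / Tval ℓ ((1 + Δ ^ 2) / (1 - Δ ^ 2))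

lemma T_real_cosh (t : ℝ) (n : ℤ) :
    (Polynomial.Chebyshev.T ℝ n).eval (Real.cosh t) = Real.cosh (n * t) := by
  have h := Polynomial.Chebyshev.T_complex_cos ((t : ℂ) * Complex.I) n
  rw [Complex.cos_mul_I] at h
  have h2 : Complex.cos (n * ((t:ℂ) * Complex.I)) = Complex.cosh ((n*t : ℝ) : ℂ) := by
    rw [← Complex.cos_mul_I]; push_cast; ring_nf
  rw [h2, ← Complex.ofReal_cosh, ← Complex.ofReal_cosh] at h
  exact_mod_cast (Polynomial.Chebyshev.complex_ofReal_eval_T (Real.cosh t) n).trans h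

lemma cosh_arccosh {y : ℝ} (hy : 1 ≤ y) : Real.cosh (arccosh y) = y := by
  have h1 : (0:ℝ) ≤ y ^ 2 - 1 := by nlinarith
  have hs : Real.sqrt (y^2-1) ^ 2 = y^2 - 1 := Real.sq_sqrt h1
  have hpos : 0 < y + Real.sqrt (y^2-1) := by
    have := Real.sqrt_nonneg (y^2-1); linarith
  rw [arccosh, Real.cosh_eq, Real.exp_log hpos, Real.exp_neg, Real.exp_log hpos]
  have hne : y + Real.sqrt (y^2-1) ≠ 0 := ne_of_gt hpos
  field_simp
  nlinarith [hs]

lemma arccosh_nonneg {y : ℝ} (hy : 1 ≤ y) : 0 ≤ arccosh y := by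
  apply Real.log_nonneg
  have := Real.sqrt_nonneg (y^2-1); linarith

lemma arccosh_mono {w z : ℝ} (hw : 1 ≤ w) (hwz : w ≤ z) : arccosh w ≤ arccosh z := by
  have h1 : (0:ℝ) ≤ w ^ 2 - 1 := by nlinarith
  have hpos : 0 < w + Real.sqrt (w^2-1) := by
    have := Real.sqrt_nonneg (w^2-1); linarith
  apply Real.log_le_log hpos
  have : Real.sqrt (w^2-1) ≤ Real.sqrt (z^2-1) := by
    apply Real.sqrt_le_sqrt; nlinarith
  linarith

lemma Tval_eq_cosh {ℓ : ℕ} {y : ℝ} (hy : 1 ≤ y) :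
    Tval ℓ y = Real.cosh (ℓ * arccosh y) := by
  have := T_real_cosh (arccosh y) ℓ
  rw [cosh_arccosh hy] at this
  rw [Tval, this]; push_cast; ring_nf

lemma abs_Tval_le_one {ℓ : ℕ} {w : ℝ} (h1 : -1 ≤ w) (h2 : w ≤ 1) : |Tval ℓ w| ≤ 1 := by
  have : w = Real.cos (Real.arccos w) := (Real.cos_arccos h1 h2).symm
  rw [Tval, this, Polynomial.Chebyshev.T_real_cos]
  exact Real.abs_cos_le_one _

lemma Tval_mono {ℓ : ℕ} {w z : ℝ} (hw : 1 ≤ w) (hwz : w ≤ z) : Tval ℓ w ≤ Tval ℓ z := by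
  rw [Tval_eq_cosh hw, Tval_eq_cosh (hw.trans hwz)]
  rw [Real.cosh_le_cosh]
  have ha : 0 ≤ arccosh w := arccosh_nonneg hw
  have hb : 0 ≤ arccosh z := arccosh_nonneg (hw.trans hwz)
  have h1 : 0 ≤ (ℓ:ℝ) * arccosh w := by positivity
  have h2 : 0 ≤ (ℓ:ℝ) * arccosh z := by positivity
  rw [abs_of_nonneg h1, abs_of_nonneg h2]
  exact mul_le_mul_of_nonneg_left (arccosh_mono hw hwz) (Nat.cast_nonneg ℓ)

/-- properties of the eigenstate-filtering polynomial `F_{Δ,ℓ}`: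
bounded by 1 on `[-1,1]`, equal to 1 at 0, and bounded by
`1 / T_ℓ((1+Δ²)/(1−Δ²)) = 1 / cosh(ℓ arccosh((1+Δ²)/(1−Δ²)))` on `[Δ, 1]`. -/
theorem stmt5 (Δ : ℝ) (hΔ : Δ ∈ Set.Ioo (0 : ℝ) 1) (ℓ : ℕ) (hℓ : 0 < ℓ) :
    (∀ x ∈ Set.Icc (-1 : ℝ) 1, |Fpoly Δ ℓ x| ≤ 1) ∧
    Fpoly Δ ℓ 0 = 1 ∧
    (∀ x ∈ Set.Icc Δ 1, |Fpoly Δ ℓ x| ≤ 1 / Tval ℓ ((1 + Δ ^ 2) / (1 - Δ ^ 2))) ∧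
    1 / Tval ℓ ((1 + Δ ^ 2) / (1 - Δ ^ 2)) =
      1 / Real.cosh (ℓ * arccosh ((1 + Δ ^ 2) / (1 - Δ ^ 2))) := by
  obtain ⟨hΔ0, hΔ1⟩ := hΔ
  have hden : (0:ℝ) < 1 - Δ ^ 2 := by nlinarith
  set z := (1 + Δ ^ 2) / (1 - Δ ^ 2) with hzdef
  have hz1 : 1 ≤ z := by rw [hzdef, le_div_iff₀ hden]; nlinarith
  have hTz_eq : Tval ℓ z = Real.cosh (ℓ * arccosh z) := Tval_eq_cosh hz1
  have hTz1 : 1 ≤ Tval ℓ z := by rw [hTz_eq]; exact Real.one_le_cosh _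
  have hTz0 : (0:ℝ) < Tval ℓ z := by linarith
  refine ⟨?_, ?_, ?_, by rw [hTz_eq]⟩
  · intro x ⟨hx1, hx2⟩
    set w := (1 + Δ ^ 2 - 2 * x ^ 2) / (1 - Δ ^ 2) with hwdef
    have hx2' : x ^ 2 ≤ 1 := by nlinarith [abs_le.2 ⟨hx1, hx2⟩, sq_abs x]
    have hwm1 : -1 ≤ w := by rw [hwdef, le_div_iff₀ hden]; nlinarith
    have hwz : w ≤ z := by rw [hwdef, hzdef, div_le_div_iff₀ hden hden]; nlinarith
    have key : |Tval ℓ w| ≤ Tval ℓ z := by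
      rcases le_or_gt w 1 with h | h
      · exact (abs_Tval_le_one hwm1 h).trans hTz1
      · have h1 : 1 ≤ Tval ℓ w := by
          rw [Tval_eq_cosh h.le]; exact Real.one_le_cosh _
        rw [abs_of_nonneg (by linarith)]
        exact Tval_mono h.le hwz
    rw [Fpoly, abs_div, abs_of_pos hTz0, div_le_one hTz0]
    exact key
  · rw [Fpoly]
    norm_num
    exact ne_of_gt hTz0
  · intro x ⟨hx1, hx2⟩
    set w := (1 + Δ ^ 2 - 2 * x ^ 2) / (1 - Δ ^ 2) with hwdef
    have hwm1 : -1 ≤ w := by rw [hwdef, le_div_iff₀ hden]; nlinarith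
    have hw1 : w ≤ 1 := by rw [hwdef, div_le_one hden]; nlinarith
    rw [Fpoly, abs_div, abs_of_pos hTz0]
    gcongr
    exact abs_Tval_le_one hwm1 hw1
end

section
/- If ℓ ≥ arccosh(1/η) / arccosh((1+Δ²)/(1−Δ²)) with η ∈ (0,1] and Δ ∈ (0,1), then for all x ∈ [Δ, 1], |F_{Δ,ℓ}(x)| ≤ η. -/
/-- T evaluated at cosh. -/
lemma Tval_cosh (ℓ : ℕ) (t : ℝ) : Tval ℓ (Real.cosh t) = Real.cosh (ℓ * t) := by
  have h := Polynomial.Chebyshev.T_complex_cos (t * Complex.I) (ℓ : ℤ)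
  rw [Complex.cos_mul_I] at h
  rw [show ((ℓ : ℤ) : ℂ) * (t * Complex.I) = ((ℓ * t : ℝ) : ℂ) * Complex.I by push_cast; ring,
    Complex.cos_mul_I] at h
  unfold Tval
  exact_mod_cast h

/-- If `ℓ ≥ arccosh(1/η) / arccosh((1+Δ²)/(1−Δ²))` with `η ∈ (0,1]` and
`Δ ∈ (0,1)`, then `|F_{Δ,ℓ}(x)| ≤ η` for all `x ∈ [Δ,1]`. -/
theorem stmt6 (Δ η : ℝ) (hΔ : Δ ∈ Set.Ioo (0 : ℝ) 1) (hη : η ∈ Set.Ioc (0 : ℝ) 1)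
    (ℓ : ℕ)
    (hℓ : arccosh (1 / η) / arccosh ((1 + Δ ^ 2) / (1 - Δ ^ 2)) ≤ (ℓ : ℝ)) :
    ∀ x ∈ Set.Icc Δ 1, |Fpoly Δ ℓ x| ≤ η := by
  obtain ⟨hΔ0, hΔ1⟩ := hΔ
  obtain ⟨hη0, hη1⟩ := hη
  have hden : (0:ℝ) < 1 - Δ ^ 2 := by nlinarith
  set y := (1 + Δ ^ 2) / (1 - Δ ^ 2) with hy
  have hy1 : 1 < y := by rw [hy, lt_div_iff₀ hden]; nlinarith
  -- T at y is large
  have hη' : 1 ≤ 1 / η := by rw [le_div_iff₀ hη0]; linarith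
  have hA : 0 < arccosh y := by
    have : (1:ℝ) < y + Real.sqrt (y ^ 2 - 1) :=
      lt_of_lt_of_le hy1 (le_add_of_le_of_nonneg le_rfl (Real.sqrt_nonneg _))
    exact Real.log_pos this
  have hmul : arccosh (1 / η) ≤ ℓ * arccosh y := by
    rw [div_le_iff₀ hA] at hℓ; linarith [hℓ]
  have hTy : 1 / η ≤ Tval ℓ y := by
    have h1 : Tval ℓ y = Real.cosh (ℓ * arccosh y) := by
      rw [← cosh_arccosh hy1.le, Tval_cosh, cosh_arccosh hy1.le]
    rw [h1, ← cosh_arccosh hη']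
    exact Real.cosh_le_cosh.mpr (by
      rw [abs_of_nonneg (arccosh_nonneg hη'), abs_of_nonneg]
      · exact hmul
      · positivity)
  have hTy0 : 0 < Tval ℓ y := lt_of_lt_of_le (by positivity) hTy
  intro x hx
  obtain ⟨hxl, hxu⟩ := hx
  -- numerator argument in [-1,1]
  set z := (1 + Δ ^ 2 - 2 * x ^ 2) / (1 - Δ ^ 2) with hz
  have hz1 : -1 ≤ z := by rw [hz, le_div_iff₀ hden]; nlinarith
  have hz2 : z ≤ 1 := by
    rw [hz, div_le_iff₀ hden]
    have : Δ ≤ x := hxl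
    nlinarith [hΔ0.le.trans hxl]
  have hTz : |Tval ℓ z| ≤ 1 := by
    obtain ⟨θ, hθ⟩ : ∃ θ : ℝ, Real.cos θ = z :=
      ⟨Real.arccos z, Real.cos_arccos hz1 hz2⟩
    rw [← hθ]
    have : Tval ℓ (Real.cos θ) = Real.cos (ℓ * θ) := by
      unfold Tval; exact_mod_cast Polynomial.Chebyshev.T_real_cos θ (ℓ : ℤ)
    rw [this]; exact Real.abs_cos_le_one _
  -- conclude
  have : |Fpoly Δ ℓ x| = |Tval ℓ z| / Tval ℓ y := by
    rw [Fpoly, abs_div, abs_of_pos hTy0]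
  rw [this]
  rw [div_le_iff₀ hTy0]
  calc |Tval ℓ z| ≤ 1 := hTz
    _ ≤ η * Tval ℓ y := by
        rw [div_le_iff₀ hη0] at hTy
        nlinarith
end

section
/- For Δ ∈ (0,1), η ∈ (0,1], the quantity arccosh(1/η)/arccosh((1+Δ²)/(1−Δ²)) is at most (1/(2Δ))·ln(2/η); hence the ceiling of the former is at most the ceiling of the latter. -/
lemma log_ratio_ge (Δ : ℝ) (h0 : 0 < Δ) (h1 : Δ < 1) :
    2 * Δ ≤ Real.log ((1 + Δ) / (1 - Δ)) := by
  have hf : ∀ x ∈ Set.Icc (0:ℝ) Δ, x < 1 := fun x hx => lt_of_le_of_lt hx.2 h1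
  set f : ℝ → ℝ := fun x => Real.log (1 + x) - Real.log (1 - x) - 2 * x with hfdef
  have hderiv : ∀ x ∈ Set.Ioo (0:ℝ) Δ,
      HasDerivAt f ((1 + x)⁻¹ + (1 - x)⁻¹ - 2) x := by
    intro x hx
    have hx1 : (0:ℝ) < 1 + x := by linarith [hx.1]
    have hx2 : (0:ℝ) < 1 - x := by linarith [hx.2, h1]
    have d1 : HasDerivAt (fun x : ℝ => Real.log (1 + x)) ((1 + x)⁻¹) x := by
      have := (Real.hasDerivAt_log hx1.ne').comp x ((hasDerivAt_id x).const_add 1)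
      simpa [Function.comp_def] using this
    have d2 : HasDerivAt (fun x : ℝ => Real.log (1 - x)) (-(1 - x)⁻¹) x := by
      have h : HasDerivAt (fun x : ℝ => 1 - x) (-1) x := by
        exact (hasDerivAt_id' x).const_sub 1
      have := (Real.hasDerivAt_log hx2.ne').comp x h
      simpa [Function.comp_def] using this
    have := (d1.sub d2).sub ((hasDerivAt_id x).const_mul 2)
    simpa [hfdef, sub_neg_eq_add, mul_one, Pi.sub_def] using this
  have hcont : ContinuousOn f (Set.Icc 0 Δ) := by
    apply ContinuousOn.sub
    apply ContinuousOn.sub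
    · exact (Real.continuousOn_log.comp (by fun_prop) (fun x hx => by
        have : (0:ℝ) < 1 + x := by linarith [hx.1]
        simpa using this.ne'))
    · exact (Real.continuousOn_log.comp (by fun_prop) (fun x hx => by
        have : (0:ℝ) < 1 - x := by linarith [hf x hx]
        simpa using this.ne'))
    · fun_prop
  have hmono : MonotoneOn f (Set.Icc 0 Δ) := by
    apply monotoneOn_of_deriv_nonneg (convex_Icc 0 Δ) hcont
    · intro x hx
      rw [interior_Icc] at hx
      exact (hderiv x hx).differentiableAt.differentiableWithinAt
    · intro x hx
      rw [interior_Icc] at hx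
      rw [(hderiv x hx).deriv]
      have hx1 : (0:ℝ) < 1 + x := by linarith [hx.1]
      have hx2 : (0:ℝ) < 1 - x := by linarith [hx.2, h1]
      have e1 : 1 - x ≤ (1 + x)⁻¹ := by
        rw [← one_div, le_div_iff₀ hx1]; nlinarith [hx.1]
      have e2 : 1 + x ≤ (1 - x)⁻¹ := by
        rw [← one_div, le_div_iff₀ hx2]; nlinarith [hx.1]
      linarith
  have h0f : f 0 = 0 := by simp [hfdef]
  have := hmono (Set.left_mem_Icc.2 h0.le) (Set.right_mem_Icc.2 h0.le) h0.le
  rw [h0f] at this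
  have hΔ2 : (0:ℝ) < 1 - Δ := by linarith
  rw [Real.log_div (by linarith) hΔ2.ne']
  simp only [hfdef] at this
  linarith


/-- For `Δ ∈ (0,1)`, `η ∈ (0,1]`, the quantity
`arccosh(1/η)/arccosh((1+Δ²)/(1−Δ²))` is at most `(1/(2Δ))·ln(2/η)`, and hence
the ceiling of the former is at most the ceiling of the latter. -/
theorem stmt7 (Δ η : ℝ) (hΔ : Δ ∈ Set.Ioo (0 : ℝ) 1) (hη : η ∈ Set.Ioc (0 : ℝ) 1) :
    arccosh (1 / η) / arccosh ((1 + Δ ^ 2) / (1 - Δ ^ 2)) ≤ (1 / (2 * Δ)) * Real.log (2 / η) ∧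
    ⌈arccosh (1 / η) / arccosh ((1 + Δ ^ 2) / (1 - Δ ^ 2))⌉ ≤
      ⌈(1 / (2 * Δ)) * Real.log (2 / η)⌉ := by
  obtain ⟨hΔ0, hΔ1⟩ := hΔ
  obtain ⟨hη0, hη1⟩ := hη
  have hΔsq : (0:ℝ) < 1 - Δ ^ 2 := by nlinarith
  -- denominator equals log((1+Δ)/(1-Δ))
  have hsq : Real.sqrt (((1 + Δ ^ 2) / (1 - Δ ^ 2)) ^ 2 - 1) = 2 * Δ / (1 - Δ ^ 2) := by
    have : ((1 + Δ ^ 2) / (1 - Δ ^ 2)) ^ 2 - 1 = (2 * Δ / (1 - Δ ^ 2)) ^ 2 := by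
      field_simp; ring
    rw [this, Real.sqrt_sq (by positivity)]
  have hden : arccosh ((1 + Δ ^ 2) / (1 - Δ ^ 2)) = Real.log ((1 + Δ) / (1 - Δ)) := by
    rw [arccosh, hsq]
    congr 1
    rw [← add_div, div_eq_div_iff hΔsq.ne' (by intro h; nlinarith)]
    ring
  have hD : 2 * Δ ≤ arccosh ((1 + Δ ^ 2) / (1 - Δ ^ 2)) := by
    rw [hden]; exact log_ratio_ge Δ hΔ0 hΔ1
  have hDpos : 0 < arccosh ((1 + Δ ^ 2) / (1 - Δ ^ 2)) := lt_of_lt_of_le (by linarith) hD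
  -- numerator bounds
  have hη1' : (1:ℝ) ≤ 1 / η := by rw [le_div_iff₀ hη0]; linarith
  have hsqle : Real.sqrt ((1 / η) ^ 2 - 1) ≤ 1 / η := by
    calc Real.sqrt ((1 / η) ^ 2 - 1) ≤ Real.sqrt ((1 / η) ^ 2) :=
          Real.sqrt_le_sqrt (by linarith)
      _ = 1 / η := Real.sqrt_sq (by positivity)
  have hN0 : 0 ≤ arccosh (1 / η) := by
    rw [arccosh]
    apply Real.log_nonneg
    have := Real.sqrt_nonneg ((1 / η) ^ 2 - 1)
    linarith
  have hNle : arccosh (1 / η) ≤ Real.log (2 / η) := by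
    rw [arccosh]
    apply Real.log_le_log (by positivity)
    calc 1 / η + Real.sqrt ((1 / η) ^ 2 - 1) ≤ 1 / η + 1 / η := by linarith
      _ = 2 / η := by ring
  have hmain : arccosh (1 / η) / arccosh ((1 + Δ ^ 2) / (1 - Δ ^ 2)) ≤
      (1 / (2 * Δ)) * Real.log (2 / η) := by
    have hLnn : 0 ≤ Real.log (2 / η) := Real.log_nonneg (by
      rw [le_div_iff₀ hη0]; linarith)
    have hrw : (1/(2*Δ)) * Real.log (2/η) = Real.log (2/η) / (2*Δ) := by ring
    rw [hrw]
    exact div_le_div₀ hLnn hNle (by positivity) hD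
  exact ⟨hmain, Int.ceil_le_ceil hmain⟩
end

section
/- Let γ ∈ ℂ, ν ∈ ℂ with |γ|² + |ν|² = 1, θ ∈ (0, π/2), and real δ₁', δ₂' with 0 ≤ δ₁' and δ₁'² + δ₂'² ≤ (4η/(1+η))² for η ∈ (0,1]. Consider the subnormalized vector v = (1 − δ₁'/2)·sin(2θ)·x̂ + δ₂'·sin(θ)·ẑ with x̂, ẑ orthonormal. Then its squared norm p satisfies sin²(2θ)·((1−η)/(1+η))² ≤ p ≤ sin²(2θ) + (4η²/(1+η)²)·sin²(θ). -/
open scoped RealInnerProductSpace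

/-- success-probability bounds for the subnormalized output vector
`v = (1 − δ₁'/2)·sin(2θ)·x̂ + δ₂'·sin(θ)·ẑ` with `x̂ ⟂ ẑ` unit vectors:
`sin²(2θ)((1−η)/(1+η))² ≤ ‖v‖² ≤ sin²(2θ) + (4η²/(1+η)²) sin²(θ)`. -/
theorem stmt11 {F : Type*} [NormedAddCommGroup F] [InnerProductSpace ℝ F]
    (xhat zhat : F) (hxhat : ‖xhat‖ = 1) (hzhat : ‖zhat‖ = 1) (horth : ⟪xhat, zhat⟫ = 0)
    (θ η δ₁' δ₂' : ℝ) (hθ : θ ∈ Set.Ioo 0 (Real.pi / 2)) (hη : η ∈ Set.Ioc (0 : ℝ) 1)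
    (h1 : 0 ≤ δ₁') (h2 : δ₁' ^ 2 + δ₂' ^ 2 ≤ (4 * η / (1 + η)) ^ 2)
    (h3 : δ₂' ^ 2 ≤ δ₁' * (4 * η / (1 + η) - δ₁')) :
    Real.sin (2 * θ) ^ 2 * ((1 - η) / (1 + η)) ^ 2 ≤
      ‖((1 - δ₁' / 2) * Real.sin (2 * θ)) • xhat + (δ₂' * Real.sin θ) • zhat‖ ^ 2 ∧
    ‖((1 - δ₁' / 2) * Real.sin (2 * θ)) • xhat + (δ₂' * Real.sin θ) • zhat‖ ^ 2 ≤
      Real.sin (2 * θ) ^ 2 + (4 * η ^ 2 / (1 + η) ^ 2) * Real.sin θ ^ 2 := by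
  obtain ⟨hηpos, hη1⟩ := hη
  have hη0 : (0:ℝ) < 1 + η := by linarith
  have hnorm : ‖((1 - δ₁' / 2) * Real.sin (2 * θ)) • xhat + (δ₂' * Real.sin θ) • zhat‖ ^ 2
      = ((1 - δ₁' / 2) * Real.sin (2 * θ)) ^ 2 + (δ₂' * Real.sin θ) ^ 2 := by
    rw [norm_add_sq_real, real_inner_smul_left, real_inner_smul_right, horth,
      norm_smul, norm_smul, hxhat, hzhat]
    simp [mul_pow, sq_abs]
  rw [hnorm]
  -- δ₁' ≤ 4η/(1+η)
  have hd1le : δ₁' ≤ 4 * η / (1 + η) := by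
    rcases eq_or_lt_of_le h1 with h | h
    · rw [← h]; positivity
    · nlinarith [sq_nonneg δ₂']
  have hfrac : 4 * η / (1 + η) ≤ 2 := by
    rw [div_le_iff₀ hη0]; linarith
  have key : (1 - η) / (1 + η) = 1 - (2 * η) / (1 + η) := by
    field_simp; ring
  have h2η : (2 * η) / (1 + η) ≤ 1 := by
    rw [div_le_one hη0]; linarith
  constructor
  · have hlow : ((1 - η) / (1 + η)) ^ 2 ≤ (1 - δ₁' / 2) ^ 2 := by
      rw [key]
      have hA : 1 - δ₁' / 2 ≥ 1 - (2 * η) / (1 + η) := by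
        have : δ₁' / 2 ≤ (2 * η) / (1 + η) := by
          rw [div_le_div_iff₀ (by norm_num) hη0]
          calc δ₁' * (1 + η) ≤ (4 * η / (1 + η)) * (1 + η) := by
                exact mul_le_mul_of_nonneg_right hd1le (le_of_lt hη0)
            _ = 2 * η * 2 := by field_simp; ring
        linarith
      have hB : (0:ℝ) ≤ 1 - (2 * η) / (1 + η) := by linarith
      nlinarith
    nlinarith [sq_nonneg (δ₂' * Real.sin θ), sq_nonneg (Real.sin (2*θ)),
      mul_le_mul_of_nonneg_left hlow (sq_nonneg (Real.sin (2*θ)))]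
  · have hle2 : δ₁' ≤ 2 := le_trans hd1le hfrac
    have hsq1 : (1 - δ₁' / 2) ^ 2 ≤ 1 := by nlinarith [h1, hle2]
    have hd2 : δ₂' ^ 2 ≤ 4 * η ^ 2 / (1 + η) ^ 2 := by
      have hamgm : δ₁' * (4 * η / (1 + η) - δ₁') ≤ (4 * η / (1 + η) / 2) ^ 2 := by
        nlinarith [sq_nonneg (δ₁' - 4 * η / (1 + η) / 2)]
      have heq : (4 * η / (1 + η) / 2) ^ 2 = 4 * η ^ 2 / (1 + η) ^ 2 := by
        field_simp; ring
      linarith [le_trans h3 hamgm]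
    have hs2 : (0:ℝ) ≤ Real.sin (2*θ) ^ 2 := sq_nonneg _
    have hs : (0:ℝ) ≤ Real.sin θ ^ 2 := sq_nonneg _
    have A : (1 - δ₁' / 2) ^ 2 * Real.sin (2*θ) ^ 2 ≤ Real.sin (2*θ) ^ 2 := by
      calc (1 - δ₁' / 2) ^ 2 * Real.sin (2*θ) ^ 2 ≤ 1 * Real.sin (2*θ) ^ 2 :=
            mul_le_mul_of_nonneg_right hsq1 hs2
        _ = Real.sin (2*θ) ^ 2 := one_mul _
    have B : δ₂' ^ 2 * Real.sin θ ^ 2 ≤ 4 * η ^ 2 / (1 + η) ^ 2 * Real.sin θ ^ 2 :=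
      mul_le_mul_of_nonneg_right hd2 hs
    rw [mul_pow, mul_pow]
    linarith
end

section
/- Let M, γ be reals with 0 < M < 1, γ ≥ 1, and Mγ ≤ 1 − M. Then for all reals ξ₁, ξ₂ with ξ₁² + ξ₂² ≤ M², one has (1 − M − γξ₁)/√((1 − M − γξ₁)² + γ²ξ₂²) ≥ √(1 − M²γ²/(1−M)²). -/
set_option maxHeartbeats 800000 in
/-- geometric overlap lower bound. For `0 < M < 1`, `γ ≥ 1`, `Mγ ≤ 1 − M`,
and all `ξ₁, ξ₂` with `ξ₁² + ξ₂² ≤ M²`,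
`(1 − M − γξ₁)/√((1 − M − γξ₁)² + γ²ξ₂²) ≥ √(1 − M²γ²/(1−M)²)`. -/
theorem stmt12 (M γ : ℝ) (hM0 : 0 < M) (hM1 : M < 1) (hγ : 1 ≤ γ)
    (hMγ : M * γ ≤ 1 - M) :
    ∀ ξ₁ ξ₂ : ℝ, ξ₁ ^ 2 + ξ₂ ^ 2 ≤ M ^ 2 →
      Real.sqrt (1 - M ^ 2 * γ ^ 2 / (1 - M) ^ 2) ≤
        (1 - M - γ * ξ₁) / Real.sqrt ((1 - M - γ * ξ₁) ^ 2 + γ ^ 2 * ξ₂ ^ 2) := by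
  intro ξ₁ ξ₂ hξ
  have hγ0 : (0:ℝ) < γ := lt_of_lt_of_le one_pos hγ
  have h1M : (0:ℝ) < 1 - M := by linarith
  have hξ1M : ξ₁ ≤ M := by nlinarith [sq_nonneg ξ₂, sq_nonneg (ξ₁ - M)]
  have haM : 0 ≤ 1 - M - γ * ξ₁ := by nlinarith
  have hcoef : 0 ≤ (1 - M)^2 - M^2 * γ^2 := by nlinarith [mul_nonneg hM0.le hγ0.le]
  have hξ2 : ξ₂^2 ≤ M^2 - ξ₁^2 := by linarith
  have hc : 1 - M ^ 2 * γ ^ 2 / (1 - M) ^ 2 = ((1-M)^2 - M^2*γ^2) / (1-M)^2 := by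
    field_simp
  have key2 : ((1-M)^2 - M^2*γ^2) * ξ₂^2 ≤ M^2 * (1 - M - γ*ξ₁)^2 := by
    nlinarith [sq_nonneg ((1-M)*ξ₁ - M^2*γ), mul_le_mul_of_nonneg_left hξ2 hcoef]
  have key : ((1-M)^2 - M^2*γ^2) * ((1 - M - γ*ξ₁)^2 + γ^2*ξ₂^2) ≤
      (1-M)^2 * (1 - M - γ*ξ₁)^2 := by
    nlinarith [mul_le_mul_of_nonneg_left key2 (sq_nonneg γ)]
  have hs0 : 0 ≤ (1 - M - γ*ξ₁)^2 + γ^2*ξ₂^2 := by positivity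
  rcases eq_or_lt_of_le hs0 with hse | hsp
  · have ha2 : (1 - M - γ*ξ₁)^2 = 0 := by nlinarith [sq_nonneg (γ*ξ₂)]
    have ha0 : 1 - M - γ*ξ₁ = 0 := by
      have := sq_eq_zero_iff.mp ha2; exact this
    have hξ20 : ξ₂ = 0 := by
      have h2 : γ^2 * ξ₂^2 = 0 := by nlinarith
      have : ξ₂^2 = 0 := by
        rcases mul_eq_zero.mp h2 with h | h
        · exact absurd h (by positivity)
        · exact h
      exact sq_eq_zero_iff.mp this
    have heq : (1-M)^2 - M^2*γ^2 = 0 := by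
      have hx : γ * ξ₁ = 1 - M := by linarith
      have : ξ₁^2 ≤ M^2 := by nlinarith [sq_nonneg ξ₂]
      nlinarith
    rw [hc, heq, zero_div, Real.sqrt_zero, ha0, zero_div]
  · have hsqs : 0 < Real.sqrt ((1 - M - γ*ξ₁)^2 + γ^2*ξ₂^2) := Real.sqrt_pos.mpr hsp
    rw [hc]
    have hdivsq : ((1-M)^2 - M^2*γ^2) / (1-M)^2 ≤
        ((1 - M - γ*ξ₁) / Real.sqrt ((1 - M - γ*ξ₁)^2 + γ^2*ξ₂^2))^2 := by
      rw [div_pow, Real.sq_sqrt hsp.le, div_le_div_iff₀ (by positivity) hsp]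
      nlinarith [key]
    calc Real.sqrt (((1-M)^2 - M^2*γ^2) / (1-M)^2)
        ≤ Real.sqrt (((1 - M - γ*ξ₁) / Real.sqrt ((1 - M - γ*ξ₁)^2 + γ^2*ξ₂^2))^2) :=
          Real.sqrt_le_sqrt hdivsq
      _ = (1 - M - γ*ξ₁) / Real.sqrt ((1 - M - γ*ξ₁)^2 + γ^2*ξ₂^2) :=
          Real.sqrt_sq (by positivity)
end

section
/- Under the hypotheses of the kernel-projection lemma: if ρ is a density operator with ⟨x|ρ|x⟩ = 1 − μ², and the map sends each pure component |φ⟩ = c₁|x⟩ + c₂|y⟩ (with y ⟂ x) to an unnormalized state whose x-component is preserved and whose y-component has norm at most η|c₂|, then the success probability (squared norm averaged over the ensemble) is at least 1 − μ², and the postselected output state ρ_out satisfies ⟨x|ρ_out|x⟩ ≥ 1 − μ²η²/(1 − μ² + μ²η²), hence (1/2)‖|x⟩⟨x| − ρ_out‖₁ ≤ μη/√(1 − μ² + μ²η²). -/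
open scoped ComplexInnerProductSpace

lemma stmt13_decomp {E : Type*} [NormedAddCommGroup E] [InnerProductSpace ℂ E]
    (x : E) (hx : ‖x‖ = 1) (v : E) :
    ‖v‖ ^ 2 = ‖(⟪x, v⟫ : ℂ)‖ ^ 2 + ‖v - (⟪x, v⟫ : ℂ) • x‖ ^ 2 := by
  set c : ℂ := ⟪x, v⟫ with hc
  have hxv : (⟪x, v - c • x⟫ : ℂ) = 0 := by
    rw [inner_sub_right, inner_smul_right, inner_self_eq_norm_sq_to_K, hx]
    push_cast; ring
  have h0 : (⟪c • x, v - c • x⟫ : ℂ) = 0 := by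
    rw [inner_smul_left, hxv, mul_zero]
  have := norm_add_sq_eq_norm_sq_add_norm_sq_of_inner_eq_zero _ _ h0
  have hv : c • x + (v - c • x) = v := by abel
  rw [hv] at this
  rw [norm_smul, hx, mul_one] at this
  rw [pow_two, pow_two, pow_two, this]
/-- kernel-projection lemma. Given an ensemble `ρ = Σᵢ pᵢ |φᵢ⟩⟨φᵢ|` with
`⟨x|ρ|x⟩ = 1 − μ²`, if each `|φᵢ⟩` is mapped to an unnormalized vector `ψᵢ` whose overlap
with `x` is preserved and whose component orthogonal to `x` shrinks by a factor `η`, then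
the success probability `Σᵢ pᵢ ‖ψᵢ‖²` is at least `1 − μ²`, the postselected output
satisfies `⟨x|ρ_out|x⟩ ≥ 1 − μ²η²/(1 − μ² + μ²η²)`, and hence the trace distance to
`|x⟩⟨x|` (which equals `√(1 − ⟨x|ρ_out|x⟩)`) is at most `μη/√(1 − μ² + μ²η²)`. -/
theorem stmt13 {E : Type*} [NormedAddCommGroup E] [InnerProductSpace ℂ E]
    {ι : Type*} [Fintype ι]
    (x : E) (hx : ‖x‖ = 1)
    (p : ι → ℝ) (hp0 : ∀ i, 0 ≤ p i) (hp1 : ∑ i, p i = 1)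
    (φ ψ : ι → E) (hφ : ∀ i, ‖φ i‖ = 1)
    (μ η : ℝ) (hμ0 : 0 ≤ μ) (hμ1 : μ < 1) (hη0 : 0 < η) (hη1 : η ≤ 1)
    (hover : ∑ i, p i * ‖(⟪x, φ i⟫ : ℂ)‖ ^ 2 = 1 - μ ^ 2)
    (hpres : ∀ i, (⟪x, ψ i⟫ : ℂ) = ⟪x, φ i⟫)
    (hshrink : ∀ i, ‖ψ i - (⟪x, ψ i⟫ : ℂ) • x‖ ≤ η * ‖φ i - (⟪x, φ i⟫ : ℂ) • x‖) :
    1 - μ ^ 2 ≤ ∑ i, p i * ‖ψ i‖ ^ 2 ∧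
    1 - μ ^ 2 * η ^ 2 / (1 - μ ^ 2 + μ ^ 2 * η ^ 2) ≤
      (∑ i, p i * ‖(⟪x, ψ i⟫ : ℂ)‖ ^ 2) / (∑ i, p i * ‖ψ i‖ ^ 2) ∧
    Real.sqrt (1 - (∑ i, p i * ‖(⟪x, ψ i⟫ : ℂ)‖ ^ 2) / (∑ i, p i * ‖ψ i‖ ^ 2)) ≤
      μ * η / Real.sqrt (1 - μ ^ 2 + μ ^ 2 * η ^ 2) := by
  have hA : (0:ℝ) < 1 - μ ^ 2 := by nlinarith
  have hD : (0:ℝ) < 1 - μ ^ 2 + μ ^ 2 * η ^ 2 := by nlinarith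
  set N := ∑ i, p i * ‖(⟪x, ψ i⟫ : ℂ)‖ ^ 2 with hN
  set S := ∑ i, p i * ‖ψ i‖ ^ 2 with hS
  have hNA : N = 1 - μ ^ 2 := by
    rw [hN, ← hover]
    exact Finset.sum_congr rfl fun i _ => by rw [hpres i]
  -- orthogonal component sums
  have hφperp : ∑ i, p i * ‖φ i - (⟪x, φ i⟫ : ℂ) • x‖ ^ 2 = μ ^ 2 := by
    have h1 : ∀ i, ‖φ i - (⟪x, φ i⟫ : ℂ) • x‖ ^ 2 = 1 - ‖(⟪x, φ i⟫ : ℂ)‖ ^ 2 := by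
      intro i
      have := stmt13_decomp x hx (φ i)
      rw [hφ i] at this; linarith
    calc ∑ i, p i * ‖φ i - (⟪x, φ i⟫ : ℂ) • x‖ ^ 2
        = ∑ i, (p i - p i * ‖(⟪x, φ i⟫ : ℂ)‖ ^ 2) := by
          exact Finset.sum_congr rfl fun i _ => by rw [h1 i]; ring
      _ = 1 - (1 - μ ^ 2) := by rw [Finset.sum_sub_distrib, hp1, hover]
      _ = μ ^ 2 := by ring
  have hSsplit : S = N + ∑ i, p i * ‖ψ i - (⟪x, ψ i⟫ : ℂ) • x‖ ^ 2 := by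
    rw [hS, hN, ← Finset.sum_add_distrib]
    exact Finset.sum_congr rfl fun i _ => by
      rw [stmt13_decomp x hx (ψ i)]; ring
  have hperpnn : 0 ≤ ∑ i, p i * ‖ψ i - (⟪x, ψ i⟫ : ℂ) • x‖ ^ 2 :=
    Finset.sum_nonneg fun i _ => mul_nonneg (hp0 i) (by positivity)
  have hperple : ∑ i, p i * ‖ψ i - (⟪x, ψ i⟫ : ℂ) • x‖ ^ 2 ≤ μ ^ 2 * η ^ 2 := by
    calc ∑ i, p i * ‖ψ i - (⟪x, ψ i⟫ : ℂ) • x‖ ^ 2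
        ≤ ∑ i, p i * (η ^ 2 * ‖φ i - (⟪x, φ i⟫ : ℂ) • x‖ ^ 2) := by
          refine Finset.sum_le_sum fun i _ => ?_
          have h := hshrink i
          have hnn : (0:ℝ) ≤ ‖ψ i - (⟪x, ψ i⟫ : ℂ) • x‖ := norm_nonneg _
          have := mul_self_le_mul_self hnn h
          have h2 : ‖ψ i - (⟪x, ψ i⟫ : ℂ) • x‖ ^ 2 ≤ η ^ 2 * ‖φ i - (⟪x, φ i⟫ : ℂ) • x‖ ^ 2 := by
            nlinarith [norm_nonneg (φ i - (⟪x, φ i⟫ : ℂ) • x)]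
          exact mul_le_mul_of_nonneg_left h2 (hp0 i)
      _ = η ^ 2 * ∑ i, p i * ‖φ i - (⟪x, φ i⟫ : ℂ) • x‖ ^ 2 := by
          rw [Finset.mul_sum]; exact Finset.sum_congr rfl fun i _ => by ring
      _ = μ ^ 2 * η ^ 2 := by rw [hφperp]; ring
  have hSge : 1 - μ ^ 2 ≤ S := by rw [hSsplit, hNA]; linarith
  have hSle : S ≤ 1 - μ ^ 2 + μ ^ 2 * η ^ 2 := by rw [hSsplit, hNA]; linarith
  have hSpos : 0 < S := lt_of_lt_of_le hA hSge
  have hratio : 1 - μ ^ 2 * η ^ 2 / (1 - μ ^ 2 + μ ^ 2 * η ^ 2) ≤ N / S := by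
    rw [hNA]
    have h1 : 1 - μ ^ 2 * η ^ 2 / (1 - μ ^ 2 + μ ^ 2 * η ^ 2)
        = (1 - μ ^ 2) / (1 - μ ^ 2 + μ ^ 2 * η ^ 2) := by
      field_simp
      ring
    rw [h1]
    exact div_le_div_of_nonneg_left hA.le hSpos hSle
  refine ⟨hSge, hratio, ?_⟩
  have h2 : 1 - N / S ≤ μ ^ 2 * η ^ 2 / (1 - μ ^ 2 + μ ^ 2 * η ^ 2) := by linarith
  calc Real.sqrt (1 - N / S)
      ≤ Real.sqrt (μ ^ 2 * η ^ 2 / (1 - μ ^ 2 + μ ^ 2 * η ^ 2)) := Real.sqrt_le_sqrt h2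
    _ = μ * η / Real.sqrt (1 - μ ^ 2 + μ ^ 2 * η ^ 2) := by
        rw [Real.sqrt_div (by positivity)]
        congr 1
        rw [show μ ^ 2 * η ^ 2 = (μ * η) ^ 2 by ring, Real.sqrt_sq (by positivity)]
end

section
/- Let ς ∈ [1/κ, 1] and let f(σ) = √((σ²κ²−1)/(κ²−1)). Then for all 1/κ ≤ σ ≤ σ' ≤ 1: 1 ≤ √(f(σ')² + (1−f(σ')²)ς²) / √(f(σ)² + (1−f(σ)²)ς²) ≤ σ'/σ. -/
/-- The adiabatic schedule function `f(σ) = √((σ²κ² − 1)/(κ² − 1))`. -/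
noncomputable def fadiab (κ σ : ℝ) : ℝ := Real.sqrt ((σ ^ 2 * κ ^ 2 - 1) / (κ ^ 2 - 1))

set_option maxHeartbeats 1000000 in
/-- for `ς ∈ [1/κ, 1]` and `1/κ ≤ σ ≤ σ' ≤ 1`,
`1 ≤ √(f(σ')² + (1−f(σ')²)ς²)/√(f(σ)² + (1−f(σ)²)ς²) ≤ σ'/σ`. -/
theorem stmt15 (κ ς σ σ' : ℝ) (hκ : 1 < κ) (hς : ς ∈ Set.Icc κ⁻¹ 1)
    (h1 : κ⁻¹ ≤ σ) (h2 : σ ≤ σ') (h3 : σ' ≤ 1) :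
    1 ≤ Real.sqrt ((fadiab κ σ') ^ 2 + (1 - (fadiab κ σ') ^ 2) * ς ^ 2) /
          Real.sqrt ((fadiab κ σ) ^ 2 + (1 - (fadiab κ σ) ^ 2) * ς ^ 2) ∧
    Real.sqrt ((fadiab κ σ') ^ 2 + (1 - (fadiab κ σ') ^ 2) * ς ^ 2) /
          Real.sqrt ((fadiab κ σ) ^ 2 + (1 - (fadiab κ σ) ^ 2) * ς ^ 2) ≤ σ' / σ := by
  obtain ⟨hς1, hς2⟩ := hς
  have hκ0 : (0:ℝ) < κ := by linarith
  have hσ0 : 0 < σ := lt_of_lt_of_le (by positivity) h1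
  have hσ'0 : 0 < σ' := lt_of_lt_of_le hσ0 h2
  have hσ1 : σ ≤ 1 := le_trans h2 h3
  have hd : (0:ℝ) < κ^2 - 1 := by nlinarith
  have hσκ : 1 ≤ σ * κ := by
    have := mul_le_mul_of_nonneg_right h1 hκ0.le
    rwa [inv_mul_cancel₀ hκ0.ne'] at this
  have hσ'κ : 1 ≤ σ' * κ := le_trans hσκ (by nlinarith)
  have hςκ : 1 ≤ ς * κ := by
    have := mul_le_mul_of_nonneg_right hς1 hκ0.le
    rwa [inv_mul_cancel₀ hκ0.ne'] at this
  have hfσ : (fadiab κ σ) ^ 2 = (σ ^ 2 * κ ^ 2 - 1) / (κ ^ 2 - 1) :=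
    Real.sq_sqrt (div_nonneg (by nlinarith) hd.le)
  have hfσ' : (fadiab κ σ') ^ 2 = (σ' ^ 2 * κ ^ 2 - 1) / (κ ^ 2 - 1) :=
    Real.sq_sqrt (div_nonneg (by nlinarith) hd.le)
  set A := (fadiab κ σ) ^ 2 + (1 - (fadiab κ σ) ^ 2) * ς ^ 2 with hAdef
  set B := (fadiab κ σ') ^ 2 + (1 - (fadiab κ σ') ^ 2) * ς ^ 2 with hBdef
  have hA : A = (σ ^ 2 * κ ^ 2 * (1 - ς ^ 2) + κ ^ 2 * ς ^ 2 - 1) / (κ ^ 2 - 1) := by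
    rw [hAdef, hfσ]; field_simp; ring
  have hB : B = (σ' ^ 2 * κ ^ 2 * (1 - ς ^ 2) + κ ^ 2 * ς ^ 2 - 1) / (κ ^ 2 - 1) := by
    rw [hBdef, hfσ']; field_simp; ring
  have hkς2 : (0:ℝ) ≤ κ ^ 2 * ς ^ 2 - 1 := by nlinarith
  have hApos : 0 < A := by
    rw [hA]
    apply div_pos _ hd
    nlinarith [mul_nonneg hkς2 (by nlinarith : (0:ℝ) ≤ 1 - σ ^ 2),
      mul_pos (mul_pos hσ0 hσ0) hd]
  have hAB : A ≤ B := by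
    have hdiff : B - A = (σ' ^ 2 - σ ^ 2) * κ ^ 2 * (1 - ς ^ 2) / (κ ^ 2 - 1) := by
      rw [hA, hB, ← sub_div, div_eq_div_iff hd.ne' hd.ne']; ring
    have hnn : 0 ≤ (σ' ^ 2 - σ ^ 2) * κ ^ 2 * (1 - ς ^ 2) / (κ ^ 2 - 1) :=
      div_nonneg (mul_nonneg (mul_nonneg (by nlinarith) (by positivity))
        (by nlinarith)) hd.le
    have h0 : 0 ≤ B - A := hdiff ▸ hnn
    linarith
  have hBpos : 0 < B := lt_of_lt_of_le hApos hAB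
  have hsA : 0 < Real.sqrt A := Real.sqrt_pos.mpr hApos
  constructor
  · exact (one_le_div hsA).mpr (Real.sqrt_le_sqrt hAB)
  · rw [div_le_div_iff₀ hsA hσ0]
    have hkey : B * σ ^ 2 ≤ σ' ^ 2 * A := by
      have hdiff : σ' ^ 2 * A - B * σ ^ 2 =
          (κ ^ 2 * ς ^ 2 - 1) * (σ' ^ 2 - σ ^ 2) / (κ ^ 2 - 1) := by
        rw [hA, hB, div_mul_eq_mul_div, mul_div_assoc', ← sub_div,
          div_eq_div_iff hd.ne' hd.ne']; ring
      have hnn : 0 ≤ (κ ^ 2 * ς ^ 2 - 1) * (σ' ^ 2 - σ ^ 2) / (κ ^ 2 - 1) :=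
        div_nonneg (mul_nonneg hkς2 (by nlinarith)) hd.le
      have h0 : 0 ≤ σ' ^ 2 * A - B * σ ^ 2 := hdiff ▸ hnn
      linarith
    calc Real.sqrt B * σ = Real.sqrt (B * σ ^ 2) := by
          rw [Real.sqrt_mul hBpos.le, Real.sqrt_sq hσ0.le]
      _ ≤ Real.sqrt (σ' ^ 2 * A) := Real.sqrt_le_sqrt hkey
      _ = σ' * Real.sqrt A := by
          rw [Real.sqrt_mul (by positivity), Real.sqrt_sq hσ'0.le]
end

section
/- Let w_j ≥ 0 with Σⱼ wⱼ² = 1, and let ςⱼ ∈ [1/κ, 1]. Define N(σ)² = Σⱼ wⱼ²/(f(σ)² + (1−f(σ)²)ςⱼ²) with f(σ) = √((σ²κ²−1)/(κ²−1)). Then for all 1/κ ≤ σ ≤ σ' ≤ 1, it holds that 1 ≤ N(σ)/N(σ') ≤ σ'/σ. -/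
/-- The norm `N(σ) = ‖x̄_σ‖` of the solution of the interpolated linear system. -/
noncomputable def Nnorm {ι : Type*} [Fintype ι] (κ : ℝ) (w ς : ι → ℝ) (σ : ℝ) : ℝ :=
  Real.sqrt (∑ j, (w j) ^ 2 / ((fadiab κ σ) ^ 2 + (1 - (fadiab κ σ) ^ 2) * (ς j) ^ 2))

lemma fadiab_sq (κ σ : ℝ) (hκ : 1 < κ) (h1 : κ⁻¹ ≤ σ) :
    fadiab κ σ ^ 2 = (σ ^ 2 * κ ^ 2 - 1) / (κ ^ 2 - 1) := by
  have hκ0 : (0:ℝ) < κ := by linarith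
  have hσκ : 1 ≤ σ * κ := by
    have := mul_le_mul_of_nonneg_right h1 hκ0.le
    rwa [inv_mul_cancel₀ hκ0.ne'] at this
  have hnum : 0 ≤ σ ^ 2 * κ ^ 2 - 1 := by nlinarith
  have hden : 0 < κ ^ 2 - 1 := by nlinarith
  exact Real.sq_sqrt (div_nonneg hnum hden.le)

set_option maxHeartbeats 1000000 in
/-- with `Σ wⱼ² = 1` and `ςⱼ ∈ [1/κ,1]`, for all `1/κ ≤ σ ≤ σ' ≤ 1`,
`1 ≤ N(σ)/N(σ') ≤ σ'/σ`. -/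
theorem stmt16 {ι : Type*} [Fintype ι] (κ : ℝ) (hκ : 1 < κ) (w ς : ι → ℝ)
    (hw : ∀ j, 0 ≤ w j) (hw1 : ∑ j, (w j) ^ 2 = 1)
    (hς : ∀ j, ς j ∈ Set.Icc κ⁻¹ 1)
    (σ σ' : ℝ) (h1 : κ⁻¹ ≤ σ) (h2 : σ ≤ σ') (h3 : σ' ≤ 1) :
    1 ≤ Nnorm κ w ς σ / Nnorm κ w ς σ' ∧ Nnorm κ w ς σ / Nnorm κ w ς σ' ≤ σ' / σ := by
  have hκ0 : (0:ℝ) < κ := by linarith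
  have hσ0 : 0 < σ := lt_of_lt_of_le (by positivity) h1
  have hσ'0 : 0 < σ' := lt_of_lt_of_le hσ0 h2
  have hden : (0:ℝ) < κ ^ 2 - 1 := by nlinarith
  have h1' : κ⁻¹ ≤ σ' := le_trans h1 h2
  have hσ1 : σ ≤ 1 := le_trans h2 h3
  set D : ℝ → ι → ℝ := fun s j => fadiab κ s ^ 2 + (1 - fadiab κ s ^ 2) * ς j ^ 2 with hD
  have hDval : ∀ s, κ⁻¹ ≤ s → ∀ j,
      D s j = (s ^ 2 * κ ^ 2 * (1 - ς j ^ 2) + ς j ^ 2 * κ ^ 2 - 1) / (κ ^ 2 - 1) := by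
    intro s hs j
    simp only [hD, fadiab_sq κ s hκ hs]
    field_simp
    ring
  have hςκ : ∀ j, 1 ≤ ς j * κ := by
    intro j
    have := mul_le_mul_of_nonneg_right (hς j).1 hκ0.le
    rwa [inv_mul_cancel₀ hκ0.ne'] at this
  have hς0 : ∀ j, 0 < ς j := fun j => lt_of_lt_of_le (by positivity) (hς j).1
  have hς1 : ∀ j, ς j ≤ 1 := fun j => (hς j).2
  have hsκ : ∀ s, κ⁻¹ ≤ s → 1 ≤ s * κ := by
    intro s hs
    have := mul_le_mul_of_nonneg_right hs hκ0.le
    rwa [inv_mul_cancel₀ hκ0.ne'] at this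
  have hDpos : ∀ s, κ⁻¹ ≤ s → ∀ j, 0 < D s j := by
    intro s hs j
    rw [hDval s hs j]
    apply div_pos _ hden
    have hA := hsκ s hs
    have hB := hςκ j
    have hC := hς1 j
    have h0 : 0 ≤ s := le_trans (by positivity) hs
    have hsκ2 : 1 ≤ s ^ 2 * κ ^ 2 := by nlinarith
    have hςκ2 : 1 ≤ ς j ^ 2 * κ ^ 2 := by nlinarith [hς0 j]
    have h1ς : 0 ≤ 1 - ς j ^ 2 := by nlinarith [hς0 j]
    nlinarith [mul_nonneg (sub_nonneg.mpr hsκ2) h1ς,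
      mul_pos (pow_pos (hς0 j) 2) hden]
  have hDle1 : ∀ s, κ⁻¹ ≤ s → s ≤ 1 → ∀ j, D s j ≤ 1 := by
    intro s hs hs1 j
    rw [hDval s hs j, div_le_one hden]
    have h0 : 0 ≤ s := le_trans (by positivity) hs
    have h1ς : 0 ≤ 1 - ς j ^ 2 := by nlinarith [hς0 j, hς1 j]
    have h1s : 0 ≤ 1 - s ^ 2 := by nlinarith
    nlinarith [mul_nonneg (mul_nonneg (sq_nonneg κ) h1ς) h1s]
  have hDmono : ∀ j, D σ j ≤ D σ' j := by
    intro j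
    rw [hDval σ h1 j, hDval σ' h1' j]
    rw [div_le_div_iff_of_pos_right hden]
    have h1ς : 0 ≤ 1 - ς j ^ 2 := by nlinarith [hς0 j, hς1 j]
    have hσσ : σ ^ 2 ≤ σ' ^ 2 := by nlinarith
    nlinarith [mul_nonneg (mul_nonneg (sub_nonneg.mpr hσσ) (sq_nonneg κ)) h1ς]
  have hkey : ∀ j, σ ^ 2 * D σ' j ≤ σ' ^ 2 * D σ j := by
    intro j
    rw [hDval σ h1 j, hDval σ' h1' j]
    rw [← mul_div_assoc, ← mul_div_assoc, div_le_div_iff_of_pos_right hden]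
    have hςκ2 : 1 ≤ ς j ^ 2 * κ ^ 2 := by nlinarith [hςκ j, hς0 j]
    have hσσ : σ ^ 2 ≤ σ' ^ 2 := by nlinarith
    nlinarith [mul_nonneg (sub_nonneg.mpr hσσ) (sub_nonneg.mpr hςκ2)]
  -- sums
  set S : ℝ → ℝ := fun s => ∑ j, w j ^ 2 / D s j with hS
  have hS1 : ∀ s, κ⁻¹ ≤ s → s ≤ 1 → 1 ≤ S s := by
    intro s hs hs1
    rw [← hw1]
    apply Finset.sum_le_sum
    intro j _
    rw [le_div_iff₀ (hDpos s hs j)]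
    nlinarith [sq_nonneg (w j), hDle1 s hs hs1 j, (hDpos s hs j)]
  have hSmono : S σ' ≤ S σ := by
    apply Finset.sum_le_sum
    intro j _
    exact div_le_div_of_nonneg_left (sq_nonneg _) (hDpos σ h1 j) (hDmono j)
  have hSsq : σ ^ 2 * S σ ≤ σ' ^ 2 * S σ' := by
    simp only [hS, Finset.mul_sum]
    apply Finset.sum_le_sum
    intro j _
    rw [← mul_div_assoc, ← mul_div_assoc, div_le_div_iff₀ (hDpos σ h1 j) (hDpos σ' h1' j)]
    have h := mul_le_mul_of_nonneg_right (hkey j) (sq_nonneg (w j))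
    calc σ ^ 2 * w j ^ 2 * D σ' j = σ ^ 2 * D σ' j * w j ^ 2 := by ring
      _ ≤ σ' ^ 2 * D σ j * w j ^ 2 := h
      _ = σ' ^ 2 * w j ^ 2 * D σ j := by ring
  have hNσ : Nnorm κ w ς σ = Real.sqrt (S σ) := rfl
  have hNσ' : Nnorm κ w ς σ' = Real.sqrt (S σ') := rfl
  have hN'pos : 0 < Nnorm κ w ς σ' := by
    rw [hNσ']
    exact Real.sqrt_pos.mpr (lt_of_lt_of_le one_pos (hS1 σ' h1' h3))
  constructor
  · rw [le_div_iff₀ hN'pos, one_mul, hNσ, hNσ']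
    exact Real.sqrt_le_sqrt hSmono
  · rw [div_le_div_iff₀ hN'pos hσ0, hNσ, hNσ']
    have e1 : Real.sqrt (S σ) * σ = Real.sqrt (σ ^ 2 * S σ) := by
      rw [Real.sqrt_mul (sq_nonneg σ), Real.sqrt_sq hσ0.le, mul_comm]
    have e2 : σ' * Real.sqrt (S σ') = Real.sqrt (σ' ^ 2 * S σ') := by
      rw [Real.sqrt_mul (sq_nonneg σ'), Real.sqrt_sq hσ'0.le]
    rw [e1, e2]
    exact Real.sqrt_le_sqrt hSsq
end

section
/- Let wⱼ ≥ 0 with Σ wⱼ² = 1, ςⱼ ∈ [1/κ, 1], f(σ) = √((σ²κ²−1)/(κ²−1)), and for 1/κ ≤ σ < σ' ≤ 1 define the overlap O(σ,σ') = [Σⱼ wⱼ² (f(σ)f(σ') + ςⱼ²√((1−f(σ)²)(1−f(σ')²))) / ((f(σ)² + (1−f(σ)²)ςⱼ²)(f(σ')² + (1−f(σ')²)ςⱼ²))] / (N(σ)N(σ')), where N(σ)² = Σⱼ wⱼ²/(f(σ)² + (1−f(σ)²)ςⱼ²). Then O(σ,σ') ≥ 1 − (f(σ') − f(σ))/σ'.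 -/
lemma aux_core (a b σ' s g g' : ℝ) (hσ'0 : 0 < σ') (hab : a ≤ b)
    (hbσ : b ≤ σ') (hg'0 : 0 ≤ g') (hgg' : g' ≤ g)
    (hg'2 : g' ^ 2 = 1 - b ^ 2) (hs0 : 0 ≤ s)
    (hσ'D : σ' ^ 2 ≤ b ^ 2 + (1 - b ^ 2) * s)
    (hD'pos : 0 < b ^ 2 + (1 - b ^ 2) * s) :
    1 - (b - a) / σ' ≤ (a * b + s * (g * g')) / (b ^ 2 + (1 - b ^ 2) * s) := by
  rw [le_div_iff₀ hD'pos]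
  have hD'σb : σ' * b ≤ b ^ 2 + (1 - b ^ 2) * s := by
    nlinarith [mul_le_mul_of_nonneg_left hbσ hσ'0.le]
  have hmul : (1 - (b - a) / σ') * σ' = σ' - (b - a) := by field_simp
  have hgoalmul : (σ' - (b - a)) * (b ^ 2 + (1 - b ^ 2) * s) ≤
      σ' * (a * b + s * (g * g')) := by
    have hkey : s * σ' * g' ^ 2 = s * σ' * (1 - b ^ 2) := by rw [hg'2]
    nlinarith [mul_nonneg (by linarith : (0:ℝ) ≤ b - a)
        (by linarith : (0:ℝ) ≤ b ^ 2 + (1 - b ^ 2) * s - σ' * b),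
      mul_nonneg (mul_nonneg hs0 hσ'0.le)
        (mul_nonneg hg'0 (by linarith : (0:ℝ) ≤ g - g')), hkey]
  nlinarith [mul_pos hσ'0 hD'pos, hgoalmul,
    mul_le_mul_of_nonneg_right (le_of_eq hmul) hD'pos.le]

lemma aux_abstract {ι : Type*} [Fintype ι] (w s : ι → ℝ) (a b σ' g g' : ℝ)
    (hw1 : ∑ j, (w j) ^ 2 = 1) (hσ'0 : 0 < σ')
    (ha0 : 0 ≤ a) (hab : a ≤ b) (hbσ : b ≤ σ')
    (ha1 : a ^ 2 ≤ 1) (hb1 : b ^ 2 ≤ 1)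
    (hg0 : 0 ≤ g) (hg'0 : 0 ≤ g') (hgg' : g' ≤ g)
    (hg'2 : g' ^ 2 = 1 - b ^ 2)
    (hs0 : ∀ j, 0 < s j) (hs1 : ∀ j, s j ≤ 1)
    (hσ'D : ∀ j, σ' ^ 2 ≤ b ^ 2 + (1 - b ^ 2) * s j) :
    1 - (b - a) / σ' ≤
      (∑ j, (w j) ^ 2 * (a * b + s j * (g * g')) /
          ((a ^ 2 + (1 - a ^ 2) * s j) * (b ^ 2 + (1 - b ^ 2) * s j))) /
        (Real.sqrt (∑ j, (w j) ^ 2 / (a ^ 2 + (1 - a ^ 2) * s j)) *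
          Real.sqrt (∑ j, (w j) ^ 2 / (b ^ 2 + (1 - b ^ 2) * s j))) := by
  have hb0 : 0 ≤ b := le_trans ha0 hab
  have hDpos : ∀ j, 0 < a ^ 2 + (1 - a ^ 2) * s j := fun j => by
    nlinarith [mul_nonneg (sq_nonneg a) (by linarith [hs1 j] : (0:ℝ) ≤ 1 - s j), hs0 j]
  have hD'pos : ∀ j, 0 < b ^ 2 + (1 - b ^ 2) * s j := fun j => by
    nlinarith [mul_nonneg (sq_nonneg b) (by linarith [hs1 j] : (0:ℝ) ≤ 1 - s j), hs0 j]
  have hDle1 : ∀ j, a ^ 2 + (1 - a ^ 2) * s j ≤ 1 := fun j => by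
    nlinarith [mul_nonneg (by linarith : (0:ℝ) ≤ 1 - a ^ 2)
      (by linarith [hs1 j] : (0:ℝ) ≤ 1 - s j)]
  have hD'le1 : ∀ j, b ^ 2 + (1 - b ^ 2) * s j ≤ 1 := fun j => by
    nlinarith [mul_nonneg (by linarith : (0:ℝ) ≤ 1 - b ^ 2)
      (by linarith [hs1 j] : (0:ℝ) ≤ 1 - s j)]
  have hab2 : a ^ 2 ≤ b ^ 2 := by nlinarith
  have hDleD' : ∀ j, a ^ 2 + (1 - a ^ 2) * s j ≤ b ^ 2 + (1 - b ^ 2) * s j := fun j => by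
    nlinarith [mul_nonneg (by linarith : (0:ℝ) ≤ b ^ 2 - a ^ 2)
      (by linarith [hs1 j] : (0:ℝ) ≤ 1 - s j)]
  set T := ∑ j, (w j) ^ 2 / (a ^ 2 + (1 - a ^ 2) * s j) with hT_def
  set T' := ∑ j, (w j) ^ 2 / (b ^ 2 + (1 - b ^ 2) * s j) with hT'_def
  set S := ∑ j, (w j) ^ 2 * (a * b + s j * (g * g')) /
      ((a ^ 2 + (1 - a ^ 2) * s j) * (b ^ 2 + (1 - b ^ 2) * s j)) with hS_def
  have hT1 : 1 ≤ T :=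
    hw1 ▸ Finset.sum_le_sum fun j _ => le_div_self (sq_nonneg _) (hDpos j) (hDle1 j)
  have hT'1 : 1 ≤ T' :=
    hw1 ▸ Finset.sum_le_sum fun j _ => le_div_self (sq_nonneg _) (hD'pos j) (hD'le1 j)
  have hT'T : T' ≤ T :=
    Finset.sum_le_sum fun j _ =>
      div_le_div_of_nonneg_left (sq_nonneg _) (hDpos j) (hDleD' j)
  have hS0 : 0 ≤ S := by
    rw [hS_def]
    refine Finset.sum_nonneg fun j _ => div_nonneg ?_ (mul_pos (hDpos j) (hD'pos j)).le
    exact mul_nonneg (sq_nonneg _)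
      (add_nonneg (mul_nonneg ha0 hb0) (mul_nonneg (hs0 j).le (mul_nonneg hg0 hg'0)))
  have hsqT1 : 1 ≤ Real.sqrt T := by
    rw [show (1:ℝ) = Real.sqrt 1 by simp]
    exact Real.sqrt_le_sqrt hT1
  have hsqT'1 : 1 ≤ Real.sqrt T' := by
    rw [show (1:ℝ) = Real.sqrt 1 by simp]
    exact Real.sqrt_le_sqrt hT'1
  have hNNpos : 0 < Real.sqrt T * Real.sqrt T' := by nlinarith
  have hNNleT : Real.sqrt T * Real.sqrt T' ≤ T := by
    have h1 : Real.sqrt T' ≤ Real.sqrt T := Real.sqrt_le_sqrt hT'T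
    have h2 : Real.sqrt T * Real.sqrt T = T := Real.mul_self_sqrt (by linarith)
    nlinarith [Real.sqrt_nonneg T]
  by_cases hc : 0 ≤ 1 - (b - a) / σ'
  · have hkeyj : ∀ j, (1 - (b - a) / σ') * ((w j) ^ 2 / (a ^ 2 + (1 - a ^ 2) * s j)) ≤
        (w j) ^ 2 * (a * b + s j * (g * g')) /
          ((a ^ 2 + (1 - a ^ 2) * s j) * (b ^ 2 + (1 - b ^ 2) * s j)) := fun j => by
      have h1j : (w j) ^ 2 * (a * b + s j * (g * g')) /
          ((a ^ 2 + (1 - a ^ 2) * s j) * (b ^ 2 + (1 - b ^ 2) * s j)) =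
          ((w j) ^ 2 / (a ^ 2 + (1 - a ^ 2) * s j)) *
            ((a * b + s j * (g * g')) / (b ^ 2 + (1 - b ^ 2) * s j)) := by
        rw [div_mul_div_comm]
      rw [h1j, mul_comm (1 - (b - a) / σ')]
      exact mul_le_mul_of_nonneg_left
        (aux_core a b σ' (s j) g g' hσ'0 hab hbσ hg'0 hgg' hg'2 (hs0 j).le (hσ'D j)
          (hD'pos j))
        (div_nonneg (sq_nonneg _) (hDpos j).le)
    have hcTS : (1 - (b - a) / σ') * T ≤ S := by
      rw [hS_def, hT_def, Finset.mul_sum]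
      exact Finset.sum_le_sum fun j _ => hkeyj j
    have hTpos : (0:ℝ) < T := by linarith
    calc 1 - (b - a) / σ' = (1 - (b - a) / σ') * T / T := by
          rw [mul_div_assoc, div_self hTpos.ne', mul_one]
      _ ≤ S / (Real.sqrt T * Real.sqrt T') := div_le_div₀ hS0 hcTS hNNpos hNNleT
  · push_neg at hc
    have : 0 ≤ S / (Real.sqrt T * Real.sqrt T') := div_nonneg hS0 hNNpos.le
    linarith

set_option maxHeartbeats 800000 in
/-- the overlap `O(σ,σ') = ⟨x̄_σ | x̄_{σ'}⟩` between consecutive states on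
the adiabatic path satisfies `O(σ,σ') ≥ 1 − (f(σ') − f(σ))/σ'`. -/
theorem stmt17 {ι : Type*} [Fintype ι] (κ : ℝ) (hκ : 1 < κ) (w ς : ι → ℝ)
    (hw : ∀ j, 0 ≤ w j) (hw1 : ∑ j, (w j) ^ 2 = 1)
    (hς : ∀ j, ς j ∈ Set.Icc κ⁻¹ 1)
    (σ σ' : ℝ) (h1 : κ⁻¹ ≤ σ) (h2 : σ < σ') (h3 : σ' ≤ 1) :
    1 - (fadiab κ σ' - fadiab κ σ) / σ' ≤
      (∑ j, (w j) ^ 2 *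
          (fadiab κ σ * fadiab κ σ' +
            (ς j) ^ 2 * Real.sqrt ((1 - (fadiab κ σ) ^ 2) * (1 - (fadiab κ σ') ^ 2))) /
          (((fadiab κ σ) ^ 2 + (1 - (fadiab κ σ) ^ 2) * (ς j) ^ 2) *
            ((fadiab κ σ') ^ 2 + (1 - (fadiab κ σ') ^ 2) * (ς j) ^ 2))) /
        (Nnorm κ w ς σ * Nnorm κ w ς σ') := by
  have hκ0 : (0:ℝ) < κ := lt_trans one_pos hκ
  have hκ2 : (0:ℝ) < κ ^ 2 - 1 := by nlinarith
  have hσ0 : 0 < σ := lt_of_lt_of_le (inv_pos.mpr hκ0) h1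
  have hσ'0 : 0 < σ' := lt_trans hσ0 h2
  have h1κσ : 1 ≤ σ * κ := by
    have := mul_le_mul_of_nonneg_right h1 hκ0.le
    rwa [inv_mul_cancel₀ hκ0.ne'] at this
  have hnum : 0 ≤ σ ^ 2 * κ ^ 2 - 1 := by nlinarith
  have hnum' : 0 ≤ σ' ^ 2 * κ ^ 2 - 1 := by nlinarith
  have ha2 : (fadiab κ σ) ^ 2 = (σ ^ 2 * κ ^ 2 - 1) / (κ ^ 2 - 1) :=
    Real.sq_sqrt (div_nonneg hnum hκ2.le)
  have hb2 : (fadiab κ σ') ^ 2 = (σ' ^ 2 * κ ^ 2 - 1) / (κ ^ 2 - 1) :=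
    Real.sq_sqrt (div_nonneg hnum' hκ2.le)
  have ha2' : (fadiab κ σ) ^ 2 * (κ ^ 2 - 1) = σ ^ 2 * κ ^ 2 - 1 := by
    rw [ha2]; field_simp
  have hb2' : (fadiab κ σ') ^ 2 * (κ ^ 2 - 1) = σ' ^ 2 * κ ^ 2 - 1 := by
    rw [hb2]; field_simp
  have hσle1 : σ ≤ 1 := le_of_lt (lt_of_lt_of_le h2 h3)
  have hσ2le1 : σ ^ 2 ≤ 1 := by nlinarith
  have hσ'2le1 : σ' ^ 2 ≤ 1 := by nlinarith
  have ha1 : (fadiab κ σ) ^ 2 ≤ 1 := by nlinarith [ha2']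
  have hb1 : (fadiab κ σ') ^ 2 ≤ 1 := by nlinarith [hb2']
  have ha0 : 0 ≤ fadiab κ σ := Real.sqrt_nonneg _
  have hb0 : 0 ≤ fadiab κ σ' := Real.sqrt_nonneg _
  have hσσ' : σ ^ 2 ≤ σ' ^ 2 := by nlinarith
  have hσσ'κ : σ ^ 2 * κ ^ 2 ≤ σ' ^ 2 * κ ^ 2 :=
    mul_le_mul_of_nonneg_right hσσ' (sq_nonneg κ)
  have hab2 : (fadiab κ σ) ^ 2 ≤ (fadiab κ σ') ^ 2 := by
    nlinarith [ha2', hb2', hσσ'κ, hκ2]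
  have hab : fadiab κ σ ≤ fadiab κ σ' := by nlinarith [hab2, ha0, hb0]
  have hbσ2 : (fadiab κ σ') ^ 2 ≤ σ' ^ 2 := by nlinarith [hb2', hσ'2le1, hκ2]
  have hbσ : fadiab κ σ' ≤ σ' := by nlinarith [hbσ2, hb0, hσ'0]
  have hg0 : 0 ≤ Real.sqrt (1 - (fadiab κ σ) ^ 2) := Real.sqrt_nonneg _
  have hg'0 : 0 ≤ Real.sqrt (1 - (fadiab κ σ') ^ 2) := Real.sqrt_nonneg _
  have hg'2 : (Real.sqrt (1 - (fadiab κ σ') ^ 2)) ^ 2 = 1 - (fadiab κ σ') ^ 2 :=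
    Real.sq_sqrt (by linarith)
  have hgg' : Real.sqrt (1 - (fadiab κ σ') ^ 2) ≤ Real.sqrt (1 - (fadiab κ σ) ^ 2) :=
    Real.sqrt_le_sqrt (by linarith)
  have hs0 : ∀ j, 0 < (ς j) ^ 2 := fun j => by
    have := lt_of_lt_of_le (inv_pos.mpr hκ0) (hς j).1
    positivity
  have hs1 : ∀ j, (ς j) ^ 2 ≤ 1 := fun j => by
    have h1j := lt_of_lt_of_le (inv_pos.mpr hκ0) (hς j).1
    have h2j := (hς j).2
    nlinarith
  have hσ'D : ∀ j, σ' ^ 2 ≤ (fadiab κ σ') ^ 2 + (1 - (fadiab κ σ') ^ 2) * (ς j) ^ 2 :=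
    fun j => by
    have h1j := lt_of_lt_of_le (inv_pos.mpr hκ0) (hς j).1
    have hsκ : κ⁻¹ ^ 2 ≤ (ς j) ^ 2 := by nlinarith [(hς j).1, inv_pos.mpr hκ0]
    have hκinv : κ⁻¹ ^ 2 * κ ^ 2 = 1 := by
      rw [← mul_pow, inv_mul_cancel₀ hκ0.ne']; norm_num
    have hsκ2 : 1 ≤ (ς j) ^ 2 * κ ^ 2 := by
      nlinarith [mul_le_mul_of_nonneg_right hsκ (sq_nonneg κ)]
    have h := mul_le_mul_of_nonneg_left hsκ2
      (by linarith : (0:ℝ) ≤ 1 - (fadiab κ σ') ^ 2)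
    nlinarith [hb2', hκ2]
  have hsqrt : Real.sqrt ((1 - (fadiab κ σ) ^ 2) * (1 - (fadiab κ σ') ^ 2)) =
      Real.sqrt (1 - (fadiab κ σ) ^ 2) * Real.sqrt (1 - (fadiab κ σ') ^ 2) :=
    Real.sqrt_mul (by linarith) _
  rw [hsqrt]
  have hNT : Nnorm κ w ς σ = Real.sqrt (∑ j, (w j) ^ 2 /
      ((fadiab κ σ) ^ 2 + (1 - (fadiab κ σ) ^ 2) * (ς j) ^ 2)) := rfl
  have hNT' : Nnorm κ w ς σ' = Real.sqrt (∑ j, (w j) ^ 2 /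
      ((fadiab κ σ') ^ 2 + (1 - (fadiab κ σ') ^ 2) * (ς j) ^ 2)) := rfl
  rw [hNT, hNT']
  exact aux_abstract w (fun j => (ς j) ^ 2) (fadiab κ σ) (fadiab κ σ') σ'
    (Real.sqrt (1 - (fadiab κ σ) ^ 2)) (Real.sqrt (1 - (fadiab κ σ') ^ 2))
    hw1 hσ'0 ha0 hab hbσ ha1 hb1 hg0 hg'0 hgg' hg'2 hs0 hs1 hσ'D
end
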